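/- There exist convex integrands γ₁, γ₂ on S¹ such that γ_min = min(γ₁, γ₂) is not a convex integrand. -/
import Mathlib

open RealInnerProductSpace

def unitSphere : Set (EuclideanSpace ℝ (Fin 2)) :=
  Metric.sphere (0 : EuclideanSpace ℝ (Fin 2)) 1

def wulffShape (γ : EuclideanSpace ℝ (Fin 2) → ℝ) :
    Set (EuclideanSpace ℝ (Fin 2)) :=
  {x | ∀ θ ∈ unitSphere, ⟪x, θ⟫ ≤ γ θ}

/-- `γ` is a convex integrand: it equals the support function of its Wulff shape on the sphere. -/
def IsConvexIntegrand (γ : EuclideanSpace ℝ (Fin 2) → ℝ) : Prop :=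
  ContinuousOn γ (unitSphere) ∧ (∀ θ ∈ unitSphere, 0 < γ θ) ∧
    ∀ θ ∈ unitSphere, IsLUB ((fun x => ⟪x, θ⟫) '' wulffShape γ) (γ θ)

noncomputable def cvec : EuclideanSpace ℝ (Fin 2) := EuclideanSpace.single 0 (1/2 : ℝ)

lemma norm_cvec : ‖cvec‖ = 1/2 := by
  rw [cvec, EuclideanSpace.norm_single]; norm_num

lemma sphere_norm {θ : EuclideanSpace ℝ (Fin 2)} (h : θ ∈ unitSphere) : ‖θ‖ = 1 := by
  simpa [unitSphere] using h

/-- support function of ball(v,1) is a convex integrand, provided ‖v‖ < 1. -/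
lemma ball_integrand (v : EuclideanSpace ℝ (Fin 2)) (hv : ‖v‖ < 1) :
    IsConvexIntegrand (fun θ => 1 + ⟪θ, v⟫) := by
  refine ⟨(continuous_const.add (continuous_id.inner continuous_const)).continuousOn, ?_, ?_⟩
  · intro θ hθ
    dsimp only
    have h1 := real_inner_le_norm θ (-v)
    rw [inner_neg_right] at h1
    have := sphere_norm hθ
    rw [this, one_mul, norm_neg] at h1
    linarith
  · intro θ hθ
    dsimp only
    apply IsGreatest.isLUB
    constructor
    · refine ⟨v + θ, ?_, ?_⟩
      · intro φ hφ
        dsimp only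
        have h1 := real_inner_le_norm θ φ
        rw [sphere_norm hθ, sphere_norm hφ, one_mul] at h1
        rw [inner_add_left]
        rw [real_inner_comm v φ]
        linarith
      · simp only [inner_add_left]
        rw [real_inner_self_eq_norm_sq, sphere_norm hθ, real_inner_comm]
        ring
    · rintro y ⟨x, hx, rfl⟩
      exact hx θ hθ

theorem exists_min_not_convexIntegrand :
    ∃ γ₁ γ₂ : EuclideanSpace ℝ (Fin 2) → ℝ,
      IsConvexIntegrand γ₁ ∧ IsConvexIntegrand γ₂ ∧
        ¬ IsConvexIntegrand (fun θ => min (γ₁ θ) (γ₂ θ)) := by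
  refine ⟨fun θ => 1 + ⟪θ, cvec⟫, fun θ => 1 + ⟪θ, -cvec⟫, ?_, ?_, ?_⟩
  · exact ball_integrand cvec (by rw [norm_cvec]; norm_num)
  · exact ball_integrand (-cvec) (by rw [norm_neg, norm_cvec]; norm_num)
  · rintro ⟨-, -, hlub⟩
    set γm : EuclideanSpace ℝ (Fin 2) → ℝ :=
      fun θ => min (1 + ⟪θ, cvec⟫) (1 + ⟪θ, -cvec⟫) with hγm
    -- θ₀ = e₁
    set θ₀ : EuclideanSpace ℝ (Fin 2) := EuclideanSpace.single 1 (1 : ℝ) with hθ₀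
    have hθ₀S : θ₀ ∈ unitSphere := by
      simp [unitSphere, hθ₀, EuclideanSpace.norm_single]
    have hinner0 : ⟪θ₀, cvec⟫ = 0 := by
      rw [hθ₀, cvec, EuclideanSpace.inner_single_left]
      simp
    have hval : γm θ₀ = 1 := by
      rw [hγm]; simp [hinner0, inner_neg_right]
    have hL := hlub θ₀ hθ₀S
    rw [hval] at hL
    -- √3/2 is an upper bound
    have h3 : Real.sqrt 3 ^ 2 = 3 := Real.sq_sqrt (by norm_num)
    have h3pos : (0:ℝ) < Real.sqrt 3 := Real.sqrt_pos.mpr (by norm_num)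
    set s : ℝ := Real.sqrt 3 / 2 with hs
    have hub : s ∈ upperBounds ((fun x => ⟪x, θ₀⟫) '' wulffShape γm) := by
      rintro y ⟨x, hx, rfl⟩
      set θa : EuclideanSpace ℝ (Fin 2) :=
        EuclideanSpace.single 0 (1/2 : ℝ) + EuclideanSpace.single 1 (Real.sqrt 3 / 2) with hθa
      set θb : EuclideanSpace ℝ (Fin 2) :=
        EuclideanSpace.single 0 (-(1/2) : ℝ) + EuclideanSpace.single 1 (Real.sqrt 3 / 2) with hθb
      have hna : ‖θa‖ = 1 := by
        have : ⟪θa, θa⟫ = 1 := by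
          rw [hθa]
          simp only [inner_add_left, inner_add_right, EuclideanSpace.inner_single_left,
            EuclideanSpace.inner_single_right]
          simp [EuclideanSpace.single_apply]
          nlinarith [h3]
        have h := real_inner_self_eq_norm_sq θa
        rw [this] at h
        nlinarith [norm_nonneg θa]
      have hnb : ‖θb‖ = 1 := by
        have : ⟪θb, θb⟫ = 1 := by
          rw [hθb]
          simp only [inner_add_left, inner_add_right, EuclideanSpace.inner_single_left,
            EuclideanSpace.inner_single_right]
          simp [EuclideanSpace.single_apply]
          nlinarith [h3]
        have h := real_inner_self_eq_norm_sq θb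
        rw [this] at h
        nlinarith [norm_nonneg θb]
      have hxa := hx θa (by simp [unitSphere, hna])
      have hxb := hx θb (by simp [unitSphere, hnb])
      have hac : ⟪θa, cvec⟫ = 1/4 := by
        rw [hθa, cvec]
        simp only [inner_add_left, EuclideanSpace.inner_single_left,
          EuclideanSpace.inner_single_right]
        simp [EuclideanSpace.single_apply]
        norm_num
      have hbc : ⟪θb, cvec⟫ = -(1/4) := by
        rw [hθb, cvec]
        simp only [inner_add_left, EuclideanSpace.inner_single_left,
          EuclideanSpace.inner_single_right]
        simp [EuclideanSpace.single_apply]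
        norm_num
      have h1 : ⟪x, θa⟫ ≤ 3/4 := by
        have := hxa.trans (min_le_right _ _)
        rw [inner_neg_right, hac] at this
        linarith
      have h2 : ⟪x, θb⟫ ≤ 3/4 := by
        have := hxb.trans (min_le_left _ _)
        rw [hbc] at this
        linarith
      have hsum : ⟪x, θa⟫ + ⟪x, θb⟫ = Real.sqrt 3 * ⟪x, θ₀⟫ := by
        rw [← inner_add_right]
        have : θa + θb = Real.sqrt 3 • θ₀ := by
          rw [hθa, hθb, hθ₀]
          ext i
          fin_cases i <;>
            simp [EuclideanSpace.single_apply]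
        rw [this, inner_smul_right]
      have hlt : Real.sqrt 3 * ⟪x, θ₀⟫ ≤ 3/2 := by linarith
      show ⟪x, θ₀⟫ ≤ s
      rw [hs]
      nlinarith [h3, h3pos]
    have := hL.2 hub
    rw [hs] at this
    nlinarith [h3, h3pos]
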